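/- arXiv:2107.02159 — 3 statements merged into one kernel-verified Lean document; each statement's English description precedes it below -/
import Mathlib

section
/- Let q be an odd positive integer and Q an integral quadratic form in d variables that is non-singular modulo q. Then for every a ∈ (ℤ/q)×, the group SO_Q(ℤ/q) acts transitively on the level set H_a(ℤ/q) = {x ∈ (ℤ/q)^d : Q(x) = a}: any solution can be mapped to any other by a product of at most two reflections lying in SO_Q(ℤ/q). -/
/-!
A reflection `s_w` in a vector `w` with `Q(w)` a unit lies in `O_Q` and has determinant `-1`, so
a product of two of them lies in `SO_Q`. If `Q(v₁) = Q(v₂)` and `Q(v₁ - v₂)` is a unit, then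
`s_{v₁ - v₂}` maps `v₁` to `v₂`, and composing with `s_w` for some `w ⊥ v₂` with `Q(w)` a unit
gives the required element of `SO_Q`; if `Q(v₁ + v₂)` is a unit, `s_{v₂} s_{v₁ + v₂}` works.
Over a local ring in which `2` is a unit one of the two cases occurs, because
`Q(v₁ + v₂) + Q(v₁ - v₂) = 4 Q(v₁)` is a unit; and `w` exists because otherwise `Q(v₂) N` would be
congruent to a matrix of rank one modulo the maximal ideal. The Chinese remainder theorem reduces
`ℤ/q` to the local rings `ℤ/p^k`.
-/

open Matrix

namespace Matrix

variable {n R S : Type*} [Fintype n] [CommRing R] [CommRing S]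

theorem dotProduct_mulVec_comm {N : Matrix n n R} (hN : Nᵀ = N) (x y : n → R) :
    x ⬝ᵥ N *ᵥ y = y ⬝ᵥ N *ᵥ x := by
  rw [dotProduct_mulVec, ← mulVec_transpose, hN, dotProduct_comm]

theorem map_dotProduct_mulVec (φ : R →+* S) (N : Matrix n n R) (x y : n → R) :
    φ (x ⬝ᵥ N *ᵥ y) = (φ ∘ x) ⬝ᵥ N.map φ *ᵥ (φ ∘ y) := by
  rw [φ.map_dotProduct]
  congr 2
  exact funext (φ.map_mulVec N y)

variable [DecidableEq n]

theorem det_one_add_vecMulVec (u v : n → R) : (1 + vecMulVec u v).det = 1 + v ⬝ᵥ u := by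
  rw [vecMulVec_eq (Fin 1), det_one_add_replicateCol_mul_replicateRow]

theorem transpose_mul_mul_self_eq {N g : Matrix n n R}
    (h : ∀ x y, (g *ᵥ x) ⬝ᵥ N *ᵥ (g *ᵥ y) = x ⬝ᵥ N *ᵥ y) : gᵀ * N * g = N := by
  refine toBilin'.injective (LinearMap.ext₂ fun x y => ?_)
  rw [toBilin'_apply', toBilin'_apply', ← h, ← mulVec_mulVec, ← mulVec_mulVec,
    dotProduct_mulVec, vecMul_transpose]

theorem map_eq_zero_of_forall_map_dotProduct_mulVec_self (φ : R →+* S) (h2 : IsUnit (2 : S))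
    {A : Matrix n n R} (hA : Aᵀ = A) (h : ∀ x, φ (x ⬝ᵥ A *ᵥ x) = 0) : A.map φ = 0 := by
  ext i j
  have hquad (k l : n) : Pi.single k 1 ⬝ᵥ A *ᵥ Pi.single l 1 = A k l := by simp
  have hji : A j i = A i j := by rw [← transpose_apply A i j, hA]
  have hij := h (Pi.single i 1 + Pi.single j 1)
  have hii := h (Pi.single i 1)
  have hjj := h (Pi.single j 1)
  simp only [mulVec_add, dotProduct_add, add_dotProduct, hquad, hji, map_add] at hij hii hjj
  rw [map_apply, zero_apply, ← h2.mul_right_eq_zero]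
  linear_combination hij - hii - hjj

def orthogonalSubmonoid (N : Matrix n n R) : Submonoid (Matrix n n R) where
  carrier := {g | gᵀ * N * g = N}
  one_mem' := by simp
  mul_mem' := by
    rintro g h (hg : gᵀ * N * g = N) (hh : hᵀ * N * h = N)
    calc (g * h)ᵀ * N * (g * h) = hᵀ * (gᵀ * N * g) * h := by
          simp only [transpose_mul, Matrix.mul_assoc]
      _ = N := by rw [hg, hh]

/-- `SO_Q(R)` for the form `Q(x) = x ⬝ᵥ N *ᵥ x`. -/
def specialOrthogonalSubmonoid (N : Matrix n n R) : Submonoid (Matrix n n R) :=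
  orthogonalSubmonoid N ⊓ MonoidHom.mker detMonoidHom

theorem mem_specialOrthogonalSubmonoid {N g : Matrix n n R} :
    g ∈ specialOrthogonalSubmonoid N ↔ g.det = 1 ∧ gᵀ * N * g = N := by
  rw [specialOrthogonalSubmonoid, Submonoid.mem_inf, MonoidHom.mem_mker, and_comm]
  rfl

theorem map_mem_specialOrthogonalSubmonoid (φ : R →+* S) {N g : Matrix n n R}
    (hg : g ∈ specialOrthogonalSubmonoid N) : g.map φ ∈ specialOrthogonalSubmonoid (N.map φ) := by
  obtain ⟨hdet, horth⟩ := mem_specialOrthogonalSubmonoid.1 hg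
  refine mem_specialOrthogonalSubmonoid.2 ⟨?_, ?_⟩
  · rw [← RingHom.mapMatrix_apply, ← RingHom.map_det, hdet, map_one]
  · rw [← transpose_map, ← Matrix.map_mul, ← Matrix.map_mul, horth]

theorem mem_specialOrthogonalSubmonoid_of_map_fst_of_map_snd {N g : Matrix n n (R × S)}
    (h₁ : g.map (RingHom.fst R S) ∈ specialOrthogonalSubmonoid (N.map (RingHom.fst R S)))
    (h₂ : g.map (RingHom.snd R S) ∈ specialOrthogonalSubmonoid (N.map (RingHom.snd R S))) :
    g ∈ specialOrthogonalSubmonoid N := by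
  obtain ⟨hdet₁, horth₁⟩ := mem_specialOrthogonalSubmonoid.1 h₁
  obtain ⟨hdet₂, horth₂⟩ := mem_specialOrthogonalSubmonoid.1 h₂
  refine mem_specialOrthogonalSubmonoid.2 ⟨Prod.ext ?_ ?_, ?_⟩
  · rw [← RingHom.coe_fst, RingHom.map_det, RingHom.mapMatrix_apply, hdet₁]; rfl
  · rw [← RingHom.coe_snd, RingHom.map_det, RingHom.mapMatrix_apply, hdet₂]; rfl
  · ext i j
    · exact congrFun₂ (by rw [Matrix.map_mul, Matrix.map_mul, transpose_map, horth₁] :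
        (gᵀ * N * g).map (RingHom.fst R S) = N.map (RingHom.fst R S)) i j
    · exact congrFun₂ (by rw [Matrix.map_mul, Matrix.map_mul, transpose_map, horth₂] :
        (gᵀ * N * g).map (RingHom.snd R S) = N.map (RingHom.snd R S)) i j

/-- The reflection `x ↦ x - (2 B(w, x) / Q(w)) • w` for `B(x, y) = x ⬝ᵥ N *ᵥ y` and
`Q(w) = B(w, w)`. When `Q(w)` is not a unit, `Ring.inverse` makes this the identity. -/
noncomputable def reflection (N : Matrix n n R) (w : n → R) : Matrix n n R :=
  1 - (2 * Ring.inverse (w ⬝ᵥ N *ᵥ w)) • vecMulVec w (w ᵥ* N)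

section Reflection

variable {N : Matrix n n R} {w : n → R}

theorem reflection_mulVec (x : n → R) :
    reflection N w *ᵥ x = x - (2 * Ring.inverse (w ⬝ᵥ N *ᵥ w) * (w ⬝ᵥ N *ᵥ x)) • w := by
  rw [reflection, sub_mulVec, one_mulVec, smul_mulVec, vecMulVec_mulVec, op_smul_eq_smul,
    smul_smul, dotProduct_mulVec w N x]

theorem reflection_mulVec_of_dotProduct_mulVec_eq_zero {x : n → R} (hx : w ⬝ᵥ N *ᵥ x = 0) :
    reflection N w *ᵥ x = x := by
  rw [reflection_mulVec, hx, mul_zero, zero_smul, sub_zero]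

theorem reflection_mulVec_self (hw : IsUnit (w ⬝ᵥ N *ᵥ w)) : reflection N w *ᵥ w = -w := by
  rw [reflection_mulVec, mul_assoc, Ring.inverse_mul_cancel _ hw]
  module

theorem reflection_sub_mulVec (hN : Nᵀ = N) {x y : n → R} (hxy : x ⬝ᵥ N *ᵥ x = y ⬝ᵥ N *ᵥ y)
    (hu : IsUnit ((x - y) ⬝ᵥ N *ᵥ (x - y))) : reflection N (x - y) *ᵥ x = y := by
  have hquad : (x - y) ⬝ᵥ N *ᵥ (x - y) = 2 * ((x - y) ⬝ᵥ N *ᵥ x) := by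
    simp only [mulVec_sub, dotProduct_sub, sub_dotProduct, dotProduct_mulVec_comm hN y x, hxy]
    ring
  rw [reflection_mulVec, mul_assoc, ← mul_left_comm, ← hquad, Ring.inverse_mul_cancel _ hu,
    one_smul, sub_sub_cancel]

theorem det_reflection (hw : IsUnit (w ⬝ᵥ N *ᵥ w)) : (reflection N w).det = -1 := by
  rw [reflection, sub_eq_add_neg, ← neg_smul, ← smul_vecMulVec, det_one_add_vecMulVec,
    dotProduct_smul, ← dotProduct_mulVec, smul_eq_mul, neg_mul, mul_assoc,
    Ring.inverse_mul_cancel _ hw]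
  norm_num

theorem reflection_dotProduct_mulVec_reflection (hN : Nᵀ = N) (hw : IsUnit (w ⬝ᵥ N *ᵥ w))
    (x y : n → R) :
    (reflection N w *ᵥ x) ⬝ᵥ N *ᵥ (reflection N w *ᵥ y) = x ⬝ᵥ N *ᵥ y := by
  have hwx : x ⬝ᵥ N *ᵥ w = w ⬝ᵥ N *ᵥ x := dotProduct_mulVec_comm hN x w
  simp only [reflection_mulVec, mulVec_sub, mulVec_smul, dotProduct_sub, sub_dotProduct,
    dotProduct_smul, smul_dotProduct, smul_eq_mul, hwx]
  linear_combination (4 * Ring.inverse (w ⬝ᵥ N *ᵥ w) * (w ⬝ᵥ N *ᵥ x) * (w ⬝ᵥ N *ᵥ y)) *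
    Ring.inverse_mul_cancel _ hw

theorem reflection_mem_orthogonalSubmonoid (hN : Nᵀ = N) (hw : IsUnit (w ⬝ᵥ N *ᵥ w)) :
    reflection N w ∈ orthogonalSubmonoid N :=
  transpose_mul_mul_self_eq (reflection_dotProduct_mulVec_reflection hN hw)

theorem reflection_mul_reflection_mem (hN : Nᵀ = N) {u : n → R} (hu : IsUnit (u ⬝ᵥ N *ᵥ u))
    (hw : IsUnit (w ⬝ᵥ N *ᵥ w)) :
    reflection N u * reflection N w ∈ specialOrthogonalSubmonoid N := by
  refine mem_specialOrthogonalSubmonoid.2 ⟨?_, mul_mem (reflection_mem_orthogonalSubmonoid hN hu)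
    (reflection_mem_orthogonalSubmonoid hN hw)⟩
  rw [det_mul, det_reflection hu, det_reflection hw, neg_one_mul, neg_neg]

theorem exists_mem_specialOrthogonalSubmonoid_mulVec_eq_of_isUnit_add (hN : Nᵀ = N)
    {x y : n → R} (hxy : x ⬝ᵥ N *ᵥ x = y ⬝ᵥ N *ᵥ y) (hy : IsUnit (y ⬝ᵥ N *ᵥ y))
    (hu : IsUnit ((x + y) ⬝ᵥ N *ᵥ (x + y))) :
    ∃ g ∈ specialOrthogonalSubmonoid N, g *ᵥ x = y := by
  have hxy' : x ⬝ᵥ N *ᵥ x = -y ⬝ᵥ N *ᵥ -y := by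
    rw [mulVec_neg, dotProduct_neg, neg_dotProduct, neg_neg, hxy]
  rw [← sub_neg_eq_add] at hu
  refine ⟨_, reflection_mul_reflection_mem hN hy hu, ?_⟩
  rw [← mulVec_mulVec, reflection_sub_mulVec hN hxy' hu, mulVec_neg, reflection_mulVec_self hy,
    neg_neg]

theorem exists_mem_specialOrthogonalSubmonoid_mulVec_eq_of_isUnit_sub (hN : Nᵀ = N)
    {x y : n → R} (hxy : x ⬝ᵥ N *ᵥ x = y ⬝ᵥ N *ᵥ y) (hu : IsUnit ((x - y) ⬝ᵥ N *ᵥ (x - y)))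
    (hwy : w ⬝ᵥ N *ᵥ y = 0) (hw : IsUnit (w ⬝ᵥ N *ᵥ w)) :
    ∃ g ∈ specialOrthogonalSubmonoid N, g *ᵥ x = y := by
  refine ⟨_, reflection_mul_reflection_mem hN hw hu, ?_⟩
  rw [← mulVec_mulVec, reflection_sub_mulVec hN hxy hu,
    reflection_mulVec_of_dotProduct_mulVec_eq_zero hwy]

end Reflection

section IsLocalRing

variable [IsLocalRing R] [Nontrivial n] {N : Matrix n n R}

theorem exists_isUnit_dotProduct_mulVec_self_sub_sq (h2 : IsUnit (2 : R)) (hN : Nᵀ = N)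
    (hNdet : IsUnit N.det) (u : n → R) : ∃ x, IsUnit (x ⬝ᵥ N *ᵥ x - (u ⬝ᵥ x) ^ 2) := by
  -- Otherwise `N ≡ vecMulVec u u` modulo the maximal ideal, and the latter is singular.
  by_contra! h
  set A := N - vecMulVec u u
  have hA : Aᵀ = A := by rw [transpose_sub, transpose_vecMulVec, hN]
  have hquad (x : n → R) : x ⬝ᵥ A *ᵥ x = x ⬝ᵥ N *ᵥ x - (u ⬝ᵥ x) ^ 2 := by
    rw [sub_mulVec, dotProduct_sub, vecMulVec_mulVec, op_smul_eq_smul, dotProduct_smul,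
      smul_eq_mul, dotProduct_comm x u, sq]
  have hA0 : A.map (IsLocalRing.residue R) = 0 := by
    refine map_eq_zero_of_forall_map_dotProduct_mulVec_self _ ?_ hA fun x => ?_
    · rw [← map_ofNat (IsLocalRing.residue R) 2]
      exact h2.map _
    · rw [hquad, IsLocalRing.residue_eq_zero_iff, IsLocalRing.mem_maximalIdeal]
      exact h x
  have hmap : N.map (IsLocalRing.residue R) = (vecMulVec u u).map (IsLocalRing.residue R) := by
    rw [← sub_eq_zero, ← RingHom.mapMatrix_apply, ← RingHom.mapMatrix_apply, ← map_sub]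
    exact hA0
  have hdet : IsLocalRing.residue R N.det = 0 := by
    rw [RingHom.map_det, RingHom.mapMatrix_apply, hmap, ← RingHom.mapMatrix_apply,
      ← RingHom.map_det, det_vecMulVec, map_zero]
  exact (IsLocalRing.residue_ne_zero_iff_isUnit _).2 hNdet hdet

theorem exists_dotProduct_mulVec_eq_zero_isUnit (h2 : IsUnit (2 : R)) (hN : Nᵀ = N)
    (hNdet : IsUnit N.det) {v : n → R} (hv : IsUnit (v ⬝ᵥ N *ᵥ v)) :
    ∃ w, w ⬝ᵥ N *ᵥ v = 0 ∧ IsUnit (w ⬝ᵥ N *ᵥ w) := by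
  set a := v ⬝ᵥ N *ᵥ v
  obtain ⟨x, hx⟩ := exists_isUnit_dotProduct_mulVec_self_sub_sq h2 (N := a • N)
    (by rw [transpose_smul, hN]) (by rw [det_smul]; exact (hv.pow _).mul hNdet) (N *ᵥ v)
  have hvx : v ⬝ᵥ N *ᵥ x = x ⬝ᵥ N *ᵥ v := dotProduct_mulVec_comm hN v x
  have hxv : N *ᵥ v ⬝ᵥ x = x ⬝ᵥ N *ᵥ v := dotProduct_comm _ _
  -- `w` is the projection of `a • x` to the orthogonal complement of `v`
  refine ⟨a • x - (x ⬝ᵥ N *ᵥ v) • v, ?_, ?_⟩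
  · simp only [sub_dotProduct, smul_dotProduct, smul_eq_mul]
    ring
  · convert hv.mul hx using 1
    simp only [mulVec_sub, mulVec_smul, smul_mulVec, dotProduct_sub, sub_dotProduct,
      dotProduct_smul, smul_dotProduct, smul_eq_mul, hvx, hxv]
    ring

end IsLocalRing

end Matrix

def SpecialOrthogonalTransitive (n R : Type*) [Fintype n] [DecidableEq n] [CommRing R] : Prop :=
  ∀ N : Matrix n n R, Nᵀ = N → IsUnit N.det → ∀ v₁ v₂ : n → R, IsUnit (v₁ ⬝ᵥ N *ᵥ v₁) →
    v₁ ⬝ᵥ N *ᵥ v₁ = v₂ ⬝ᵥ N *ᵥ v₂ → ∃ g ∈ specialOrthogonalSubmonoid N, g *ᵥ v₁ = v₂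

namespace SpecialOrthogonalTransitive

variable {n R S : Type*} [Fintype n] [DecidableEq n] [CommRing R] [CommRing S]

theorem of_isLocalRing [IsLocalRing R] [Nontrivial n] (h2 : IsUnit (2 : R)) :
    SpecialOrthogonalTransitive n R := by
  intro N hN hNdet v₁ v₂ hv₁ hv
  have hv₂ : IsUnit (v₂ ⬝ᵥ N *ᵥ v₂) := hv ▸ hv₁
  have hparallelogram : (v₁ + v₂) ⬝ᵥ N *ᵥ (v₁ + v₂) + (v₁ - v₂) ⬝ᵥ N *ᵥ (v₁ - v₂) =
      2 * (2 * v₁ ⬝ᵥ N *ᵥ v₁) := by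
    simp only [mulVec_add, mulVec_sub, dotProduct_add, dotProduct_sub, add_dotProduct,
      sub_dotProduct, ← hv]
    ring
  rcases IsLocalRing.isUnit_or_isUnit_of_isUnit_add (hparallelogram ▸ h2.mul (h2.mul hv₁))
    with hadd | hsub
  · exact exists_mem_specialOrthogonalSubmonoid_mulVec_eq_of_isUnit_add hN hv hv₂ hadd
  · obtain ⟨w, hw₀, hw⟩ := exists_dotProduct_mulVec_eq_zero_isUnit h2 hN hNdet hv₂
    exact exists_mem_specialOrthogonalSubmonoid_mulVec_eq_of_isUnit_sub hN hv hsub hw₀ hw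

theorem of_subsingleton [Subsingleton R] : SpecialOrthogonalTransitive n R :=
  fun _ _ _ _ _ _ _ => ⟨1, one_mem _, Subsingleton.elim _ _⟩

theorem exists_map (h : SpecialOrthogonalTransitive n R) (φ : S →+* R) {N : Matrix n n S}
    (hN : Nᵀ = N) (hNdet : IsUnit N.det) {v₁ v₂ : n → S} (hv₁ : IsUnit (v₁ ⬝ᵥ N *ᵥ v₁))
    (hv : v₁ ⬝ᵥ N *ᵥ v₁ = v₂ ⬝ᵥ N *ᵥ v₂) :
    ∃ g ∈ specialOrthogonalSubmonoid (N.map φ), g *ᵥ (φ ∘ v₁) = φ ∘ v₂ := by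
  refine h (N.map φ) (by rw [← transpose_map, hN]) ?_ _ _ ?_ ?_
  · rw [← RingHom.mapMatrix_apply, ← RingHom.map_det]
    exact hNdet.map φ
  · rw [← map_dotProduct_mulVec]
    exact hv₁.map φ
  · rw [← map_dotProduct_mulVec, ← map_dotProduct_mulVec, hv]

theorem of_ringEquiv (h : SpecialOrthogonalTransitive n R) (e : R ≃+* S) :
    SpecialOrthogonalTransitive n S := by
  intro N hN hNdet v₁ v₂ hv₁ hv
  obtain ⟨g, hg, hgv⟩ := h.exists_map (e.symm : S →+* R) hN hNdet hv₁ hv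
  have hN' : (N.map (e.symm : S →+* R)).map (e : R →+* S) = N := by ext; simp
  have hv₁' : (e : R →+* S) ∘ ((e.symm : S →+* R) ∘ v₁) = v₁ := by ext; simp
  refine ⟨g.map (e : R →+* S), hN' ▸ map_mem_specialOrthogonalSubmonoid _ hg, funext fun i => ?_⟩
  rw [← hv₁', ← RingHom.map_mulVec, hgv]
  simp

theorem prod (hR : SpecialOrthogonalTransitive n R) (hS : SpecialOrthogonalTransitive n S) :
    SpecialOrthogonalTransitive n (R × S) := by
  intro N hN hNdet v₁ v₂ hv₁ hv
  obtain ⟨g₁, hg₁, hgv₁⟩ := hR.exists_map (RingHom.fst R S) hN hNdet hv₁ hv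
  obtain ⟨g₂, hg₂, hgv₂⟩ := hS.exists_map (RingHom.snd R S) hN hNdet hv₁ hv
  set g : Matrix n n (R × S) := of fun i j => (g₁ i j, g₂ i j)
  have hg₁' : g.map (RingHom.fst R S) = g₁ := rfl
  have hg₂' : g.map (RingHom.snd R S) = g₂ := rfl
  refine ⟨g, mem_specialOrthogonalSubmonoid_of_map_fst_of_map_snd (hg₁' ▸ hg₁) (hg₂' ▸ hg₂),
    funext fun i => Prod.ext ?_ ?_⟩
  · rw [← RingHom.coe_fst, RingHom.map_mulVec, hg₁', hgv₁]
    rfl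
  · rw [← RingHom.coe_snd, RingHom.map_mulVec, hg₂', hgv₂]
    rfl

end SpecialOrthogonalTransitive

theorem ZMod.isLocalRing_pow {p k : ℕ} [Fact p.Prime] (hk : 0 < k) : IsLocalRing (ZMod (p ^ k)) :=
  have : Fact (1 < p ^ k) := ⟨Nat.one_lt_pow hk.ne' (Fact.out : p.Prime).one_lt⟩
  IsLocalRing.of_surjective' (PadicInt.toZModPow k) (ZMod.ringHom_surjective _)

theorem ZMod.isUnit_two {q : ℕ} (hq : Odd q) : IsUnit (2 : ZMod q) := by
  rw [← Nat.cast_ofNat, ZMod.isUnit_iff_coprime]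
  exact Nat.coprime_two_left.2 hq

theorem SpecialOrthogonalTransitive.zmod {n : Type*} [Fintype n] [DecidableEq n] [Nontrivial n]
    {q : ℕ} (hq : Odd q) : SpecialOrthogonalTransitive n (ZMod q) := by
  induction q using Nat.recOnPosPrimePosCoprime with
  | prime_pow p k hp hk =>
    have : Fact p.Prime := ⟨hp⟩
    have := ZMod.isLocalRing_pow (p := p) hk
    exact of_isLocalRing (ZMod.isUnit_two hq)
  | zero => exact absurd hq Nat.not_odd_zero
  | one => exact of_subsingleton
  | coprime a b _ _ hab iha ihb =>
    obtain ⟨ha, hb⟩ := Nat.odd_mul.1 hq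
    exact ((iha ha).prod (ihb hb)).of_ringEquiv (ZMod.chineseRemainder hab).symm

theorem stmt8_general (d q : ℕ) (hd : 2 ≤ d) (hq : Odd q)
    (M : Matrix (Fin d) (Fin d) ℤ) (hM : Mᵀ = M)
    (hMdet : IsUnit ((M.det : ℤ) : ZMod q))
    (a : ZMod q) (ha : IsUnit a)
    (v₁ v₂ : Fin d → ZMod q)
    (h1 : v₁ ⬝ᵥ ((M.map (Int.cast : ℤ → ZMod q)) *ᵥ v₁) = a)
    (h2 : v₂ ⬝ᵥ ((M.map (Int.cast : ℤ → ZMod q)) *ᵥ v₂) = a) :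
    ∃ g : Matrix (Fin d) (Fin d) (ZMod q), g.det = 1 ∧
      gᵀ * (M.map (Int.cast : ℤ → ZMod q)) * g = M.map (Int.cast : ℤ → ZMod q) ∧
      g *ᵥ v₁ = v₂ := by
  have : Nontrivial (Fin d) := Fin.nontrivial_iff_two_le.2 hd
  obtain ⟨g, hg, hgv⟩ := SpecialOrthogonalTransitive.zmod hq (M.map Int.cast)
    (by rw [← transpose_map, hM]) (by rwa [← Int.cast_det]) v₁ v₂ (h1 ▸ ha) (h1.trans h2.symm)
  obtain ⟨hdet, horth⟩ := mem_specialOrthogonalSubmonoid.1 hg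
  exact ⟨g, hdet, horth, hgv⟩

/-- Let `q` be odd and `Q` an integral quadratic form (companion matrix `M`) that is
non-singular modulo `q`. Then for every unit `a ∈ (ℤ/q)ˣ`, `SO_Q(ℤ/q)` acts
transitively on `{x : Q(x) = a}`. -/
theorem stmt8 (d q : ℕ) (hd : 2 ≤ d) (hq : Odd q) (hq0 : 0 < q)
    (M : Matrix (Fin d) (Fin d) ℤ) (hM : Mᵀ = M)
    (hMdet : IsUnit ((M.det : ℤ) : ZMod q))
    (a : ZMod q) (ha : IsUnit a)
    (v₁ v₂ : Fin d → ZMod q)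
    (h1 : v₁ ⬝ᵥ ((M.map (Int.cast : ℤ → ZMod q)) *ᵥ v₁) = a)
    (h2 : v₂ ⬝ᵥ ((M.map (Int.cast : ℤ → ZMod q)) *ᵥ v₂) = a) :
    ∃ g : Matrix (Fin d) (Fin d) (ZMod q), g.det = 1 ∧
      gᵀ * (M.map (Int.cast : ℤ → ZMod q)) * g = M.map (Int.cast : ℤ → ZMod q) ∧
      g *ᵥ v₁ = v₂ :=
  stmt8_general d q hd hq M hM hMdet a ha v₁ v₂ h1 h2
end

section
/- Let p be an odd prime, k ≥ 1, and Q an integral quadratic form in d variables whose companion matrix M has determinant a unit mod p. Then the natural reduction map SO_Q(ℤ/p^{k+1}) → SO_Q(ℤ/p^k) is surjective. -/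
/-!
Write `c = p ^ k`, so that `c² = 0` in `ℤ/p^{k+1}` and `c` generates the kernel of the reduction.
Lift `ḡ` entrywise to some `F`; then `FᵀMF = M + cE` with `cE` symmetric. For `Y = ½ M⁻¹E` the
matrix `g = F(1 - cY)` is exactly orthogonal: the first-order terms `c(YᵀM + MY) = cE` cancel the
error and the second-order terms vanish. Finally `δ = det g` satisfies `δ² = 1` and `δ = 1 + ct`,
so `2ct = 0`, and `δ = 1` because `2` is a unit.
-/

open Matrix

theorem eq_one_of_mul_self_eq_one_of_sub_mem_span {R : Type*} [CommRing R] {a c : R}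
    (hc : c * c = 0) (h2 : IsUnit (2 : R)) (ha : a * a = 1) (ha1 : a - 1 ∈ Ideal.span {c}) :
    a = 1 := by
  obtain ⟨t, ht⟩ := Ideal.mem_span_singleton'.mp ha1
  have h2t : 2 * (t * c) = 0 := by
    linear_combination ha - t * t * hc + (t * c + a + 1) * ht
  rw [← sub_eq_zero, ← ht, ← h2.mul_right_eq_zero, h2t]

namespace Matrix

variable {R : Type*} [CommRing R] {n : Type*}

theorem exists_eq_smul_of_forall_mem_span_singleton {c : R} {A : Matrix n n R}
    (h : ∀ i j, A i j ∈ Ideal.span {c}) : ∃ E : Matrix n n R, A = c • E := by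
  choose E hE using fun i j => Ideal.mem_span_singleton'.mp (h i j)
  exact ⟨of E, ext fun i j => by simp [← hE, mul_comm]⟩

variable [Fintype n] [DecidableEq n]

theorem det_mul_self_eq_one_of_transpose_mul_mul_eq {M g : Matrix n n R} (hMu : IsUnit M.det)
    (hg : gᵀ * M * g = M) : g.det * g.det = 1 := by
  have h := congrArg det hg
  rw [det_mul, det_mul, det_transpose] at h
  exact hMu.mul_left_cancel (by linear_combination h)

theorem exists_transpose_mul_add_smul_mul_eq {c : R} (hc : c * c = 0) (h2 : IsUnit (2 : R))
    {M E : Matrix n n R} (hM : Mᵀ = M) (hMu : IsUnit M.det) (hE : (c • E)ᵀ = c • E) :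
    ∃ Y : Matrix n n R, (1 - c • Y)ᵀ * (M + c • E) * (1 - c • Y) = M := by
  set u : R := ↑h2.unit⁻¹
  refine ⟨u • (M⁻¹ * E), ?_⟩
  have hMY : M * (M⁻¹ * E) = E := by
    rw [← Matrix.mul_assoc, mul_nonsing_inv _ hMu, Matrix.one_mul]
  have hYM : (M⁻¹ * E)ᵀ * M = Eᵀ := by
    rw [transpose_mul, transpose_nonsing_inv, hM, Matrix.mul_assoc, nonsing_inv_mul _ hMu,
      Matrix.mul_one]
  have hcc : ∀ A : Matrix n n R, c • c • A = 0 := fun A => by rw [smul_smul, hc, zero_smul]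
  have hu : u • c • E + u • c • E = c • E := by
    rw [← add_smul, ← two_mul, h2.mul_val_inv, one_smul]
  rw [transpose_smul] at hE
  simp only [transpose_sub, transpose_one, transpose_smul, sub_mul, mul_sub, add_mul, mul_add,
    one_mul, mul_one, Matrix.smul_mul, Matrix.mul_smul, hMY, hYM, smul_comm c u, hE, hcc,
    smul_zero, sub_zero, add_zero]
  generalize u • c • E = V at hu ⊢
  rw [← hu]
  abel

variable {S : Type*} [CommRing S]

theorem exists_lift_of_transpose_mul_mul_eq (f : R →+* S) (hf : Function.Surjective f)
    {c : R} (hker : RingHom.ker f = Ideal.span {c}) (hc : c * c = 0) (h2 : IsUnit (2 : R))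
    {M : Matrix n n R} (hM : Mᵀ = M) (hMu : IsUnit M.det)
    {G : Matrix n n S} (hG : Gᵀ * M.map f * G = M.map f) :
    ∃ g : Matrix n n R, gᵀ * M * g = M ∧ g.map f = G := by
  obtain ⟨F, rfl⟩ : ∃ F : Matrix n n R, F.map f = G :=
    ⟨G.map (Function.surjInv hf), ext fun i j => Function.surjInv_eq hf _⟩
  have hmap : f.mapMatrix (Fᵀ * M * F - M) = 0 := by
    simp only [map_sub, map_mul, RingHom.mapMatrix_apply, transpose_map, hG, sub_self]
  have hmem : ∀ i j, (Fᵀ * M * F - M) i j ∈ Ideal.span {c} := fun i j => by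
    rw [← hker, RingHom.mem_ker]
    exact congrFun (congrFun hmap i) j
  obtain ⟨E, hE⟩ := exists_eq_smul_of_forall_mem_span_singleton hmem
  have hEsymm : (c • E)ᵀ = c • E := by
    rw [← hE, transpose_sub, transpose_mul, transpose_mul, transpose_transpose, hM,
      Matrix.mul_assoc]
  obtain ⟨Y, hY⟩ := exists_transpose_mul_add_smul_mul_eq hc h2 hM hMu hEsymm
  refine ⟨F * (1 - c • Y), ?_, ?_⟩
  · calc (F * (1 - c • Y))ᵀ * M * (F * (1 - c • Y))
          = (1 - c • Y)ᵀ * (Fᵀ * M * F) * (1 - c • Y) := by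
            simp only [transpose_mul, Matrix.mul_assoc]
      _ = M := by rw [eq_add_of_sub_eq' hE, hY]
  · have hfc : f c = 0 := by
      rw [← RingHom.mem_ker, hker]; exact Ideal.mem_span_singleton_self c
    rw [Matrix.map_mul, ← RingHom.mapMatrix_apply f (1 - c • Y), map_sub, map_one,
      RingHom.mapMatrix_apply, Matrix.map_smul' _ _ _ (map_mul f), hfc, zero_smul, sub_zero,
      Matrix.mul_one]

theorem exists_lift_of_transpose_mul_mul_eq_of_det_eq_one (f : R →+* S)
    (hf : Function.Surjective f) {c : R} (hker : RingHom.ker f = Ideal.span {c})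
    (hc : c * c = 0) (h2 : IsUnit (2 : R)) {M : Matrix n n R} (hM : Mᵀ = M)
    (hMu : IsUnit M.det) {G : Matrix n n S} (hG : Gᵀ * M.map f * G = M.map f)
    (hGdet : G.det = 1) :
    ∃ g : Matrix n n R, g.det = 1 ∧ gᵀ * M * g = M ∧ g.map f = G := by
  obtain ⟨g, hg, rfl⟩ := exists_lift_of_transpose_mul_mul_eq f hf hker hc h2 hM hMu hG
  refine ⟨g, eq_one_of_mul_self_eq_one_of_sub_mem_span hc h2
    (det_mul_self_eq_one_of_transpose_mul_mul_eq hMu hg) ?_, hg, rfl⟩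
  rw [← hker, RingHom.mem_ker, map_sub, map_one, RingHom.map_det, RingHom.mapMatrix_apply,
    hGdet, sub_self]

end Matrix

namespace ZMod

theorem ker_castHom {m n : ℕ} (h : m ∣ n) :
    RingHom.ker (castHom h (ZMod m)) = Ideal.span {(m : ZMod n)} := by
  ext x
  obtain ⟨z, rfl⟩ := intCast_surjective x
  rw [RingHom.mem_ker, map_intCast, intCast_zmod_eq_zero_iff_dvd, Ideal.mem_span_singleton']
  constructor
  · rintro ⟨w, rfl⟩
    exact ⟨w, by push_cast; ring⟩
  · rintro ⟨a, ha⟩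
    have := congrArg (castHom h (ZMod m)) ha
    rwa [map_mul, map_natCast, natCast_self, mul_zero, map_intCast, eq_comm,
      intCast_zmod_eq_zero_iff_dvd] at this

theorem isUnit_intCast_of_not_dvd {p : ℕ} (hp : p.Prime) (m : ℕ) {z : ℤ}
    (hz : ¬ (p : ℤ) ∣ z) : IsUnit (z : ZMod (p ^ m)) := by
  rw [coe_int_isUnit_iff_isCoprime, Nat.cast_pow]
  exact ((Nat.prime_iff_prime_int.mp hp).coprime_iff_not_dvd.mpr hz).pow_left

theorem natCast_pow_mul_self_eq_zero (p : ℕ) {k : ℕ} (hk : 1 ≤ k) :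
    ((p ^ k : ℕ) : ZMod (p ^ (k + 1))) * ((p ^ k : ℕ) : ZMod (p ^ (k + 1))) = 0 := by
  rw [← Nat.cast_mul, natCast_eq_zero_iff, ← pow_add]
  exact pow_dvd_pow p (by omega)

end ZMod

/-- Let `p` be an odd prime, `k ≥ 1`, and `Q(x) = xᵀMx` with `M` integral symmetric and
`p ∤ det M`. Then the reduction map `SO_Q(ℤ/p^{k+1}) → SO_Q(ℤ/p^k)` is surjective. -/
theorem stmt10 (p k d : ℕ) [Fact p.Prime] (hp : p ≠ 2) (hk : 1 ≤ k)
    (M : Matrix (Fin d) (Fin d) ℤ) (hM : Mᵀ = M) (hMdet : ¬ (p : ℤ) ∣ M.det)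
    (gbar : Matrix (Fin d) (Fin d) (ZMod (p ^ k)))
    (hdet : gbar.det = 1)
    (horth : gbarᵀ * M.map (Int.cast : ℤ → ZMod (p ^ k)) * gbar
      = M.map (Int.cast : ℤ → ZMod (p ^ k))) :
    ∃ g : Matrix (Fin d) (Fin d) (ZMod (p ^ (k + 1))),
      g.det = 1 ∧
      gᵀ * M.map (Int.cast : ℤ → ZMod (p ^ (k + 1))) * g
        = M.map (Int.cast : ℤ → ZMod (p ^ (k + 1))) ∧
      g.map (ZMod.castHom (pow_dvd_pow p (Nat.le_succ k)) (ZMod (p ^ k))) = gbar := by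
  have hp' : p.Prime := Fact.out
  set f := ZMod.castHom (pow_dvd_pow p (Nat.le_succ k)) (ZMod (p ^ k))
  have hMf : (M.map (Int.cast : ℤ → ZMod (p ^ (k + 1)))).map f = M.map Int.cast := by
    simp only [Matrix.map_map, Function.comp_def, map_intCast]
  have hMu : IsUnit (M.map (Int.cast : ℤ → ZMod (p ^ (k + 1)))).det := by
    rw [← Int.cast_det]
    exact ZMod.isUnit_intCast_of_not_dvd hp' (k + 1) hMdet
  have h2 : IsUnit (2 : ZMod (p ^ (k + 1))) := by
    have hp2 : ¬ (p : ℤ) ∣ 2 := by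
      exact_mod_cast (Nat.prime_dvd_prime_iff_eq hp' Nat.prime_two).not.mpr hp
    exact_mod_cast ZMod.isUnit_intCast_of_not_dvd hp' (k + 1) hp2
  exact exists_lift_of_transpose_mul_mul_eq_of_det_eq_one f (ZMod.castHom_surjective _)
    (ZMod.ker_castHom _) (ZMod.natCast_pow_mul_self_eq_zero p hk) h2
    (by rw [← transpose_map, hM]) hMu (by rwa [hMf]) hdet
end

section
/- Let Q be a non-degenerate integral quadratic form with companion matrix M, g ∈ SL_d(ℤ), ĝ the d×(d-1) matrix of the first d-1 columns of g, and γ ∈ SL_{d-1}(ℚ). Then the determinant of the companion matrix γᵗ ĝᵗ M⁻¹ ĝ γ of the quadratic form φ_g^γ = Q*∘g∘γ on ℚ^{d-1} equals Q(τ(g)) / det(M), where τ(g) = (gᵗ)⁻¹e_d and Q*(x) = xᵗM⁻¹x. -/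
/-!
With `G = g`, `N = M` over `ℚ`, put `B = Gᵀ N⁻¹ G`; then `ĝᵀ N⁻¹ ĝ` is the leading principal
`(d-1)`-minor of `B`, i.e. the last diagonal cofactor of `B`, which equals `det B · (B⁻¹)_{dd}`.
Since `det B = det G ^ 2 / det N` and `B⁻¹ = G⁻¹ N G⁻ᵀ`, whose `(d, d)` entry is
`τᵀ N τ` for `τ = G⁻ᵀ e_d`, the minor is `det G ^ 2 · Q(τ) / det N`.
Conjugating by `γ` multiplies the determinant by `det γ ^ 2 = 1`.
-/

open Matrix

namespace Matrix

theorem det_submatrix_castSucc_eq_adjugate_last {R : Type*} [CommRing R] {n : ℕ}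
    (A : Matrix (Fin (n + 1)) (Fin (n + 1)) R) :
    (A.submatrix Fin.castSucc Fin.castSucc).det = A.adjugate (Fin.last n) (Fin.last n) := by
  simp [adjugate_fin_succ_eq_det_submatrix, Fin.succAbove_last]

theorem transpose_mul_mul_apply {R ι κ : Type*} [CommRing R] [Fintype ι] [Fintype κ]
    (A : Matrix ι κ R) (N : Matrix ι ι R) (i j : κ) :
    (Aᵀ * N * A) i j = A.col i ⬝ᵥ N *ᵥ A.col j := by
  simp only [mul_apply, dotProduct, mulVec, col_apply, transpose_apply, Finset.sum_mul,
    Finset.mul_sum]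
  rw [Finset.sum_comm]
  exact Finset.sum_congr rfl fun _ _ => Finset.sum_congr rfl fun _ _ => by ring

variable {K : Type*} [Field K]

theorem adjugate_apply_eq_det_mul_inv_apply {ι : Type*} [Fintype ι] [DecidableEq ι]
    (A : Matrix ι ι K) (hA : A.det ≠ 0) (i j : ι) :
    A.adjugate i j = A.det * A⁻¹ i j := by
  rw [inv_def, Ring.inverse_eq_inv, smul_apply, smul_eq_mul, mul_inv_cancel_left₀ hA]

theorem det_transpose_mul_inv_mul_submatrix_castSucc {n : ℕ}
    (G N : Matrix (Fin (n + 1)) (Fin (n + 1)) K) (hG : G.det ≠ 0) (hN : N.det ≠ 0) :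
    ((G.submatrix id Fin.castSucc)ᵀ * N⁻¹ * G.submatrix id Fin.castSucc).det
      = G.det ^ 2 * (((Gᵀ)⁻¹ *ᵥ Pi.single (Fin.last n) 1) ⬝ᵥ
          N *ᵥ ((Gᵀ)⁻¹ *ᵥ Pi.single (Fin.last n) 1)) / N.det := by
  set B := Gᵀ * N⁻¹ * G
  have hsub : (G.submatrix id Fin.castSucc)ᵀ * N⁻¹ * G.submatrix id Fin.castSucc
      = B.submatrix Fin.castSucc Fin.castSucc := by
    rw [transpose_submatrix, submatrix_mul _ _ _ id _ Function.bijective_id,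
      submatrix_mul _ _ _ id _ Function.bijective_id, submatrix_id_id]
  have hBdet : B.det = G.det ^ 2 / N.det := by
    rw [det_mul, det_mul, det_transpose, det_nonsing_inv, Ring.inverse_eq_inv]
    ring
  have hBinv : B⁻¹ = ((Gᵀ)⁻¹)ᵀ * N * (Gᵀ)⁻¹ := by
    rw [mul_inv_rev, mul_inv_rev, nonsing_inv_nonsing_inv _ hN.isUnit, transpose_nonsing_inv,
      transpose_transpose, Matrix.mul_assoc]
  have hB : B.det ≠ 0 := by rw [hBdet]; exact div_ne_zero (pow_ne_zero 2 hG) hN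
  rw [hsub, det_submatrix_castSucc_eq_adjugate_last, adjugate_apply_eq_det_mul_inv_apply _ hB,
    hBinv, transpose_mul_mul_apply, hBdet, mulVec_single_one]
  ring

end Matrix

theorem stmt12_general (d : ℕ)
    (M : Matrix (Fin (d + 1)) (Fin (d + 1)) ℤ) (hMdet : M.det ≠ 0)
    (g : Matrix (Fin (d + 1)) (Fin (d + 1)) ℤ) (hg : g.det = 1)
    (γ : Matrix (Fin d) (Fin d) ℚ) (hγ : γ.det = 1)
    (τ : Fin (d + 1) → ℚ)
    (hτ : τ = ((g.map (Int.cast : ℤ → ℚ))ᵀ)⁻¹ *ᵥ Pi.single (Fin.last d) 1) :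
    (γᵀ * ((g.map (Int.cast : ℤ → ℚ)).submatrix id Fin.castSucc)ᵀ
        * (M.map (Int.cast : ℤ → ℚ))⁻¹
        * ((g.map (Int.cast : ℤ → ℚ)).submatrix id Fin.castSucc) * γ).det
      = (τ ⬝ᵥ ((M.map (Int.cast : ℤ → ℚ)) *ᵥ τ)) / (M.map (Int.cast : ℤ → ℚ)).det := by
  have hG : (g.map (Int.cast : ℤ → ℚ)).det = 1 := by rw [← Int.cast_det, hg, Int.cast_one]
  have hN : (M.map (Int.cast : ℤ → ℚ)).det ≠ 0 := by rwa [← Int.cast_det, Int.cast_ne_zero]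
  set Ĝ := (g.map (Int.cast : ℤ → ℚ)).submatrix id Fin.castSucc
  have hassoc : γᵀ * Ĝᵀ * (M.map (Int.cast : ℤ → ℚ))⁻¹ * Ĝ * γ
      = γᵀ * (Ĝᵀ * (M.map (Int.cast : ℤ → ℚ))⁻¹ * Ĝ) * γ := by
    simp only [Matrix.mul_assoc]
  rw [hassoc, det_mul, det_mul, det_transpose, hγ, one_mul, mul_one,
    det_transpose_mul_inv_mul_submatrix_castSucc _ _ (hG ▸ one_ne_zero) hN, hG, hτ, one_pow,
    one_mul]

/-- Let `Q` be a non-degenerate integral quadratic form with companion matrix `M`,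
`g ∈ SL_d(ℤ)`, `ĝ` the first `d-1` columns of `g`, and `γ ∈ SL_{d-1}(ℚ)`. Then the
determinant of the companion matrix `γᵀ ĝᵀ M⁻¹ ĝ γ` of `φ_g^γ = Q* ∘ g ∘ γ` equals
`Q(τ(g)) / det M`, where `τ(g) = (gᵀ)⁻¹ e_d`. -/
theorem stmt12 (d : ℕ) (hd : 1 ≤ d)
    (M : Matrix (Fin (d + 1)) (Fin (d + 1)) ℤ) (hM : Mᵀ = M) (hMdet : M.det ≠ 0)
    (g : Matrix (Fin (d + 1)) (Fin (d + 1)) ℤ) (hg : g.det = 1)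
    (γ : Matrix (Fin d) (Fin d) ℚ) (hγ : γ.det = 1)
    (τ : Fin (d + 1) → ℚ)
    (hτ : τ = ((g.map (Int.cast : ℤ → ℚ))ᵀ)⁻¹ *ᵥ Pi.single (Fin.last d) 1) :
    (γᵀ * ((g.map (Int.cast : ℤ → ℚ)).submatrix id Fin.castSucc)ᵀ
        * (M.map (Int.cast : ℤ → ℚ))⁻¹
        * ((g.map (Int.cast : ℤ → ℚ)).submatrix id Fin.castSucc) * γ).det
      = (τ ⬝ᵥ ((M.map (Int.cast : ℤ → ℚ)) *ᵥ τ)) / (M.map (Int.cast : ℤ → ℚ)).det :=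
  stmt12_general d M hMdet g hg γ hγ τ hτ
end
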